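/- The orthogonal complement in L²(S¹) of the kernel of the collision operator L equals the closed subspace of mean-zero functions: (Ker L)^⊥ = { h ∈ L²(S¹) : ∫_{S¹} h(v) dv = 0 }. -/

import Mathlib

open MeasureTheory Real

noncomputable section

/-- The unit circle, modelled as `ℝ / 2πℤ`, carrying the arclength measure
(total mass `2π`). -/
abbrev S1 : Type := AddCircle (2 * π)

instance : Fact ((0:ℝ) < 2 * π) := ⟨by positivity⟩

/-- The gain operator of the two-dimensional hard-disk linear Boltzmann equation:
`(K f)(v(θ)) = (1/2) ∫_{−1}^{1} f(v(θ + π − 2 arcsin δ)) dδ`. -/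
def Kop (f : S1 → ℂ) (θ : S1) : ℂ :=
  (1 / 2 : ℂ) * ∫ δ in (-1:ℝ)..1, f (θ + ((π - 2 * arcsin δ : ℝ) : S1))

/-!
`K` is an average of translations of the circle, so it acts diagonally on Fourier modes: a
substitution `δ = sin t` gives the multiplier `1 / (1 - 4 n²)` on `e^{inθ}`, which equals `1` only
for `n = 0`. Hence the fixed points of `K` in `L²(S¹)`, which form the kernel of `L = 2λ(K - I)`,
are the constants, and the orthogonal complement of the constants is the mean-zero subspace.
-/

open Complex (I)

section Shear

variable {G α : Type*} [AddGroup G] [MeasurableSpace G] [MeasurableAdd₂ G] [MeasurableSpace α]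
  {μ : Measure G} [SFinite μ] [μ.IsAddRightInvariant] {ν : Measure α} [SFinite ν] {φ : α → G}

theorem quasiMeasurePreserving_add_comp (hφ : Measurable φ) :
    Measure.QuasiMeasurePreserving (fun p : G × α => p.1 + φ p.2) (μ.prod ν) μ := by
  have hm : Measurable fun p : G × α => p.1 + φ p.2 := measurable_fst.add (hφ.comp measurable_snd)
  refine ⟨hm, Measure.AbsolutelyContinuous.mk fun s hs hμs => ?_⟩
  rw [Measure.map_apply hm hs, Measure.prod_apply_symm (hm hs)]
  have h_slice (x : α) : μ ((fun t => (t, x)) ⁻¹' ((fun p : G × α => p.1 + φ p.2) ⁻¹' s)) = 0 :=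
    (measurePreserving_add_right μ (φ x)).measure_preimage hs.nullMeasurableSet |>.trans hμs
  simp [h_slice]

theorem ae_ae_comp_add_of_ae_eq {E : Type*} {f g : G → E} (hφ : Measurable φ) (hfg : f =ᵐ[μ] g) :
    ∀ᵐ t ∂μ, ∀ᵐ x ∂ν, f (t + φ x) = g (t + φ x) :=
  Measure.ae_ae_of_ae_prod ((quasiMeasurePreserving_add_comp (ν := ν) hφ).ae_eq hfg)

theorem MeasureTheory.Integrable.comp_add_prod [IsFiniteMeasure ν] {E : Type*}
    [NormedAddCommGroup E] {f : G → E} (hf : Integrable f μ) (hφ : Measurable φ) :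
    Integrable (fun p : G × α => f (p.1 + φ p.2)) (μ.prod ν) := by
  have hmeas := hf.aestronglyMeasurable.comp_quasiMeasurePreserving
    (quasiMeasurePreserving_add_comp (ν := ν) hφ)
  refine (integrable_prod_iff' hmeas).2 ⟨ae_of_all _ fun x => hf.comp_add_right (φ x), ?_⟩
  have h_const (x : α) : ∫ t, ‖f (t + φ x)‖ ∂μ = ∫ t, ‖f t‖ ∂μ :=
    integral_add_right_eq_self (fun t => ‖f t‖) (φ x)
  simpa only [Function.comp_apply, h_const] using integrable_const (μ := ν) (∫ t, ‖f t‖ ∂μ)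

end Shear

section Fourier

open AddCircle

variable {T : ℝ}

theorem fourier_apply_add (n : ℤ) (x y : AddCircle T) :
    fourier n (x + y) = fourier n x * fourier n y := by
  simp_rw [fourier_apply, smul_add, toCircle_add, Circle.coe_mul]

theorem fourier_neg_apply_neg (n : ℤ) (x : AddCircle T) : fourier (-n) (-x) = fourier n x := by
  rw [fourier_apply, fourier_apply, smul_neg, neg_smul, neg_neg]

variable [Fact (0 < T)]

theorem ae_volume_eq_ae_haarAddCircle :
    ae (volume : Measure (AddCircle T)) = ae haarAddCircle := by
  rw [volume_eq_smul_haarAddCircle, Measure.ae_ennreal_smul_measure_eq]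
  exact (ENNReal.ofReal_pos.2 Fact.out).ne'

variable {E : Type*} [NormedAddCommGroup E] [NormedSpace ℂ E]

theorem fourierCoeff_comp_add_right (f : AddCircle T → E) (a : AddCircle T) (n : ℤ) :
    fourierCoeff (fun t => f (t + a)) n = fourier n a • fourierCoeff f n := by
  have h_char (s : AddCircle T) : fourier (-n) (s - a) = fourier n a * fourier (-n) s := by
    rw [sub_eq_add_neg, fourier_apply_add, fourier_neg_apply_neg, mul_comm]
  have h_shift := integral_add_right_eq_self (μ := haarAddCircle)
    (fun s => fourier (-n) (s - a) • f s) a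
  simp_rw [add_sub_cancel_right, h_char, mul_smul, integral_smul] at h_shift
  exact h_shift

theorem fourierCoeff_integral_comp_add [CompleteSpace E] {α : Type*} [MeasurableSpace α]
    {ν : Measure α} [IsFiniteMeasure ν] {φ : α → AddCircle T} (hφ : Measurable φ)
    {f : AddCircle T → E} (hf : Integrable f haarAddCircle) (n : ℤ) :
    fourierCoeff (fun t => ∫ x, f (t + φ x) ∂ν) n =
      (∫ x, fourier n (φ x) ∂ν) • fourierCoeff f n := by
  have h_int : Integrable (fun p : AddCircle T × α => fourier (-n) p.1 • f (p.1 + φ p.2))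
      (haarAddCircle.prod ν) :=
    (hf.comp_add_prod hφ).bdd_smul 1
      ((map_continuous (fourier (-n))).measurable.comp measurable_fst).aestronglyMeasurable
      (ae_of_all _ fun p => by rw [fourier_apply, Circle.norm_coe])
  calc fourierCoeff (fun t => ∫ x, f (t + φ x) ∂ν) n
      = ∫ t, ∫ x, fourier (-n) t • f (t + φ x) ∂ν ∂haarAddCircle := by
        simp_rw [fourierCoeff, integral_smul]
    _ = ∫ x, fourierCoeff (fun t => f (t + φ x)) n ∂ν := integral_integral_swap h_int
    _ = (∫ x, fourier n (φ x) ∂ν) • fourierCoeff f n := by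
        simp_rw [fourierCoeff_comp_add_right, integral_smul_const]

theorem ae_eq_const_of_fourierCoeff_eq_zero {f : AddCircle T → ℂ}
    (hf : MemLp f 2 haarAddCircle) (h : ∀ n ≠ 0, fourierCoeff f n = 0) :
    f =ᵐ[haarAddCircle] fun _ => fourierCoeff f 0 := by
  have h_series := hasSum_fourier_series_L2 (hf.toLp f)
  rw [fourierCoeff_congr_ae hf.coeFn_toLp] at h_series
  have h_single : hf.toLp f = fourierCoeff f 0 • fourierLp 2 0 :=
    h_series.unique (hasSum_single 0 fun n hn => by rw [h n hn, zero_smul])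
  filter_upwards [hf.coeFn_toLp, Lp.coeFn_smul (fourierCoeff f 0) (fourierLp 2 (T := T) 0),
    coeFn_fourierLp 2 (T := T) 0] with t h_f h_smul h_fourier
  rw [← h_f, h_single, h_smul, Pi.smul_apply, h_fourier, fourier_zero, smul_eq_mul, mul_one]

end Fourier

namespace MeasureTheory

variable {α : Type*} [MeasurableSpace α] {μ : Measure α} [IsFiniteMeasure μ]

theorem L2.inner_const_one (f : Lp ℂ 2 μ) : inner ℂ (Lp.const 2 μ (1 : ℂ)) f = ∫ x, f x ∂μ := by
  rw [← indicatorConstLp_univ, L2.inner_indicatorConstLp_one, setIntegral_univ]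

theorem Lp.mem_span_const_one_iff {f : Lp ℂ 2 μ} :
    f ∈ ℂ ∙ Lp.const 2 μ (1 : ℂ) ↔ ∃ c : ℂ, f =ᵐ[μ] fun _ => c := by
  rw [Submodule.mem_span_singleton]
  constructor
  · rintro ⟨c, rfl⟩
    refine ⟨c, ?_⟩
    filter_upwards [Lp.coeFn_smul c (Lp.const 2 μ (1 : ℂ)), Lp.coeFn_const 2 μ (1 : ℂ)]
      with x h_smul h_one
    rw [h_smul, Pi.smul_apply, h_one, Function.const_apply, smul_eq_mul, mul_one]
  · rintro ⟨c, hc⟩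
    refine ⟨c, Lp.ext ?_⟩
    filter_upwards [Lp.coeFn_smul c (Lp.const 2 μ (1 : ℂ)), Lp.coeFn_const 2 μ (1 : ℂ), hc]
      with x h_smul h_one h_f
    rw [h_smul, Pi.smul_apply, h_one, Function.const_apply, smul_eq_mul, mul_one, h_f]

end MeasureTheory

theorem one_sub_four_mul_sq_ne_zero (n : ℤ) : (1 - 4 * n ^ 2 : ℂ) ≠ 0 := by
  have h : (1 - 4 * n ^ 2 : ℤ) ≠ 0 := by
    have := sq_nonneg n
    omega
  exact_mod_cast h

theorem integral_cos_mul_cexp (n : ℤ) :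
    ∫ t in -(π / 2)..π / 2, (cos t : ℂ) * Complex.exp (I * n * (π - 2 * t)) =
      2 / (1 - 4 * n ^ 2) := by
  have hD := one_sub_four_mul_sq_ne_zero n
  let F : ℝ → ℂ := fun t =>
    Complex.exp (I * n * (π - 2 * t)) * (sin t - 2 * I * n * cos t) / (1 - 4 * n ^ 2)
  have hF (t : ℝ) : HasDerivAt F ((cos t : ℂ) * Complex.exp (I * n * (π - 2 * t))) t := by
    have h_arg : HasDerivAt (fun t : ℝ => I * n * (π - 2 * (t : ℂ))) (I * n * -2) t := by
      simpa using (((hasDerivAt_id t).ofReal_comp.const_mul 2).const_sub (π : ℂ)).const_mul (I * n)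
    have h_trig := (hasDerivAt_sin t).ofReal_comp.sub
      ((hasDerivAt_cos t).ofReal_comp.const_mul (2 * I * n))
    refine ((h_arg.cexp.mul h_trig).div_const (1 - 4 * n ^ 2 : ℂ)).congr_deriv ?_
    rw [Pi.sub_apply, Complex.ofReal_neg, div_eq_iff hD]
    linear_combination (4 * n ^ 2 * cos t * Complex.exp (I * n * (π - 2 * t))) * Complex.I_sq
  have h_cont : Continuous fun t : ℝ => (cos t : ℂ) * Complex.exp (I * n * (π - 2 * t)) := by
    fun_prop
  rw [intervalIntegral.integral_eq_sub_of_hasDerivAt (fun t _ => hF t)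
    (h_cont.intervalIntegrable _ _)]
  have h_left : Complex.exp (I * n * (π - 2 * ((-(π / 2) : ℝ) : ℂ))) = 1 := by
    rw [← Complex.exp_int_mul_two_pi_mul_I n]; push_cast; ring_nf
  have h_right : Complex.exp (I * n * (π - 2 * ((π / 2 : ℝ) : ℂ))) = 1 := by
    push_cast; ring_nf; exact Complex.exp_zero
  simp only [F, h_left, h_right, sin_neg, cos_neg, sin_pi_div_two, cos_pi_div_two]
  push_cast
  field_simp
  ring

/-- The angle by which a collision with impact parameter `δ` rotates the velocity. -/
def deflection (δ : ℝ) : S1 := ((π - 2 * arcsin δ : ℝ) : S1)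

theorem continuous_deflection : Continuous deflection :=
  (AddCircle.continuous_mk' _).comp (by fun_prop)

theorem fourier_deflection (n : ℤ) (δ : ℝ) :
    fourier n (deflection δ) = Complex.exp (I * n * (π - 2 * arcsin δ)) := by
  rw [deflection, fourier_coe_apply]
  congr 1
  push_cast
  field_simp

theorem integral_fourier_deflection (n : ℤ) :
    ∫ δ in (-1 : ℝ)..1, fourier n (deflection δ) = 2 / (1 - 4 * n ^ 2) := by
  have h_subst := intervalIntegral.integral_deriv_smul_comp (a := -(π / 2)) (b := π / 2)
    (fun t _ => hasDerivAt_sin t) continuous_cos.continuousOn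
    ((map_continuous (fourier n)).comp continuous_deflection)
  rw [sin_neg, sin_pi_div_two] at h_subst
  rw [← integral_cos_mul_cexp n]
  refine h_subst.symm.trans ?_
  refine intervalIntegral.integral_congr fun t ht => ?_
  rw [Set.uIcc_of_le (by linarith [pi_pos])] at ht
  simp only [Function.comp_apply, fourier_deflection, arcsin_sin ht.1 ht.2, Complex.real_smul]

theorem Kop_eq_integral (f : S1 → ℂ) :
    Kop f = fun θ => (1 / 2 : ℂ) * ∫ δ in Set.Ioc (-1 : ℝ) 1, f (θ + deflection δ) := by
  ext θ
  rw [Kop, intervalIntegral.integral_of_le (by norm_num)]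
  rfl

theorem Kop_const (c : ℂ) : Kop (fun _ => c) = fun _ => c := by
  ext θ
  rw [Kop, intervalIntegral.integral_const]
  norm_num
  ring

theorem Kop_congr_ae {f g : S1 → ℂ} (h : f =ᵐ[volume] g) : Kop f =ᵐ[volume] Kop g := by
  filter_upwards [ae_ae_comp_add_of_ae_eq (ν := volume.restrict (Set.Ioc (-1 : ℝ) 1))
    continuous_deflection.measurable h] with θ hθ
  simp only [Kop_eq_integral, integral_congr_ae hθ]

theorem fourierCoeff_Kop {f : S1 → ℂ} (hf : Integrable f AddCircle.haarAddCircle) (n : ℤ) :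
    fourierCoeff (Kop f) n = (1 - 4 * (n : ℂ) ^ 2)⁻¹ * fourierCoeff f n := by
  rw [Kop_eq_integral, fourierCoeff.const_mul,
    fourierCoeff_integral_comp_add continuous_deflection.measurable hf,
    ← intervalIntegral.integral_of_le (by norm_num), integral_fourier_deflection, smul_eq_mul]
  ring

theorem ae_eq_const_of_Kop_ae_eq {f : S1 → ℂ} (hf : MemLp f 2 volume) (hK : Kop f =ᵐ[volume] f) :
    f =ᵐ[volume] fun _ => fourierCoeff f 0 := by
  rw [ae_volume_eq_ae_haarAddCircle] at hK ⊢
  refine ae_eq_const_of_fourierCoeff_eq_zero hf.haarAddCircle fun n hn => ?_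
  have h_fixed := fourierCoeff_Kop (hf.haarAddCircle.integrable one_le_two) n
  rw [fourierCoeff_congr_ae hK] at h_fixed
  have h_mult : (1 - 4 * n ^ 2 : ℂ)⁻¹ ≠ 1 := by
    rw [Ne, inv_eq_one, sub_eq_self]
    exact mul_ne_zero (by norm_num) (pow_ne_zero 2 (Int.cast_ne_zero.2 hn))
  exact (mul_left_eq_self₀.1 h_fixed.symm).resolve_left h_mult

theorem apply_eq_self_iff_mem_span_const
    (T : Lp ℂ 2 (volume : Measure S1) →L[ℂ] Lp ℂ 2 (volume : Measure S1))
    (hT : ∀ f : Lp ℂ 2 (volume : Measure S1), (T f : S1 → ℂ) =ᵐ[volume] Kop f)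
    (f : Lp ℂ 2 (volume : Measure S1)) :
    T f = f ↔ f ∈ ℂ ∙ Lp.const 2 (volume : Measure S1) (1 : ℂ) := by
  constructor
  · intro h_fixed
    have hK : Kop f =ᵐ[volume] f := (hT f).symm.trans (by rw [h_fixed])
    exact Lp.mem_span_const_one_iff.2 ⟨_, ae_eq_const_of_Kop_ae_eq (Lp.memLp f) hK⟩
  · intro h_span
    obtain ⟨c, rfl⟩ := Submodule.mem_span_singleton.1 h_span
    have h_one : T (Lp.const 2 volume (1 : ℂ)) = Lp.const 2 volume (1 : ℂ) := by
      have h_coe := Lp.coeFn_const 2 (volume : Measure S1) (1 : ℂ)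
      refine Lp.ext ?_
      calc _ =ᵐ[volume] Kop (Lp.const 2 volume (1 : ℂ)) := hT _
        _ =ᵐ[volume] Kop (fun _ => 1) := Kop_congr_ae h_coe
        _ = fun _ => 1 := Kop_const 1
        _ =ᵐ[volume] _ := h_coe.symm
    rw [map_smul, h_one]

/-- the orthogonal complement in `L²(S¹)` of the kernel of the
collision operator `L = 2λ(K − I)` is exactly the closed subspace of mean-zero
functions. -/
theorem ker_L_orthogonal_eq_mean_zero
    (lam : ℝ) (hlam : 0 < lam)
    (T : Lp ℂ 2 (volume : Measure S1) →L[ℂ] Lp ℂ 2 (volume : Measure S1))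
    (hT : ∀ f : Lp ℂ 2 (volume : Measure S1), (T f : S1 → ℂ) =ᵐ[volume] Kop f) :
    ∀ h : Lp ℂ 2 (volume : Measure S1),
      h ∈ (LinearMap.ker
            ((((2 * lam : ℝ) : ℂ) •
              (T - ContinuousLinearMap.id ℂ (Lp ℂ 2 (volume : Measure S1)))).toLinearMap))ᗮ
        ↔ (∫ v, h v ∂(volume : Measure S1)) = 0 := by
  have h_ker : LinearMap.ker
      ((((2 * lam : ℝ) : ℂ) •
        (T - ContinuousLinearMap.id ℂ (Lp ℂ 2 (volume : Measure S1)))).toLinearMap) =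
      ℂ ∙ Lp.const 2 (volume : Measure S1) (1 : ℂ) := by
    ext f
    rw [LinearMap.mem_ker, ← apply_eq_self_iff_mem_span_const T hT]
    simp [hlam.ne', sub_eq_zero]
  intro h
  rw [h_ker, Submodule.mem_orthogonal_singleton_iff_inner_right, L2.inner_const_one]
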